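/- Let X, Y ∈ ℂ^{N×N} and C₁(λ) = λX + Y be an invertible pencil at λ ∈ ℂ. The backward error η₂(λ, C₁) := min{‖(‖ΔY‖_F, ‖ΔX‖_F)‖₂ : det(C₁(λ) + ΔY + λΔX) = 0} satisfies η₂(λ, C₁) = σ_min(C₁(λ)) / ‖(1, λ)‖₂. -/

import Mathlib

/-! The bound `σ_min(A) ≤ ‖ΔY‖_F + |μ| ‖ΔX‖_F ≤ √(1+|μ|²) ‖(ΔY, ΔX)‖` comes from applying
`A = -(ΔY + μ ΔX)` to a null vector of the perturbed pencil, followed by Cauchy–Schwarz.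
Conversely, for a unit vector `v` the rank-one perturbation `ΔY = -t (Av) v*`,
`ΔX = -t μ̄ (Av) v*` with `t = (1+|μ|²)⁻¹` annihilates `v` and has size `‖Av‖ / √(1+|μ|²)`;
letting `‖Av‖` approach `σ_min(A)` gives equality. -/

open Matrix BigOperators

noncomputable def evnorm {n : Type*} [Fintype n] (v : n → ℂ) : ℝ :=
  Real.sqrt (∑ i, ‖v i‖ ^ 2)

noncomputable def frob {m n : Type*} [Fintype m] [Fintype n] (M : Matrix m n ℂ) : ℝ :=
  Real.sqrt (∑ i, ∑ j, ‖M i j‖ ^ 2)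

noncomputable def sigmaMax {m n : Type*} [Fintype m] [Fintype n] (T : Matrix m n ℂ) : ℝ :=
  sSup {x | ∃ v, evnorm v = 1 ∧ x = evnorm (T.mulVec v)}

noncomputable def sigmaMin {m n : Type*} [Fintype m] [Fintype n] (T : Matrix m n ℂ) : ℝ :=
  sInf {x | ∃ v, evnorm v = 1 ∧ x = evnorm (T.mulVec v)}

def hcat3 {i a b c : Type*} (A : Matrix i a ℂ) (B : Matrix i b ℂ) (C : Matrix i c ℂ) :
    Matrix i (a ⊕ b ⊕ c) ℂ :=
  Matrix.of fun x j => match j with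
    | Sum.inl j => A x j
    | Sum.inr (Sum.inl j) => B x j
    | Sum.inr (Sum.inr j) => C x j

def vcat3 {a b c j : Type*} (A : Matrix a j ℂ) (B : Matrix b j ℂ) (C : Matrix c j ℂ) :
    Matrix (a ⊕ b ⊕ c) j ℂ :=
  Matrix.of fun i y => match i with
    | Sum.inl i => A i y
    | Sum.inr (Sum.inl i) => B i y
    | Sum.inr (Sum.inr i) => C i y

noncomputable def Lnorm (m : ℕ) (μ : ℂ) : ℝ :=
  Real.sqrt (∑ i ∈ Finset.range (m + 1), ‖μ‖ ^ (2 * i))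

section Norms

variable {m n : Type*} [Fintype m] [Fintype n]

lemma evnorm_eq_norm (v : n → ℂ) : evnorm v = ‖WithLp.toLp 2 v‖ := by
  rw [EuclideanSpace.norm_eq]
  rfl

lemma evnorm_nonneg (v : n → ℂ) : 0 ≤ evnorm v := Real.sqrt_nonneg _

lemma evnorm_sq (v : n → ℂ) : evnorm v ^ 2 = ∑ i, ‖v i‖ ^ 2 :=
  Real.sq_sqrt (by positivity)

lemma evnorm_eq_zero {v : n → ℂ} : evnorm v = 0 ↔ v = 0 := by
  rw [evnorm_eq_norm, norm_eq_zero, WithLp.toLp_eq_zero]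

lemma evnorm_smul (c : ℂ) (v : n → ℂ) : evnorm (c • v) = ‖c‖ * evnorm v := by
  rw [evnorm_eq_norm, evnorm_eq_norm, WithLp.toLp_smul, norm_smul]

lemma evnorm_neg (v : n → ℂ) : evnorm (-v) = evnorm v := by
  simp [evnorm]

lemma evnorm_star (v : n → ℂ) : evnorm (star v) = evnorm v := by
  simp [evnorm]

lemma evnorm_add_le (u v : n → ℂ) : evnorm (u + v) ≤ evnorm u + evnorm v := by
  simpa only [evnorm_eq_norm, WithLp.toLp_add] using norm_add_le _ _

lemma evnorm_pi_single [DecidableEq n] (i : n) (c : ℂ) : evnorm (Pi.single i c) = ‖c‖ := by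
  rw [evnorm_eq_norm, PiLp.toLp_single, PiLp.norm_single]

lemma star_dotProduct_self_eq_evnorm_sq (v : n → ℂ) :
    star v ⬝ᵥ v = ((evnorm v ^ 2 : ℝ) : ℂ) := by
  simp [evnorm_sq, dotProduct, Complex.conj_mul']

lemma frob_smul (c : ℂ) (M : Matrix m n ℂ) : frob (c • M) = ‖c‖ * frob M := by
  rw [frob, frob, ← Real.sqrt_sq (norm_nonneg c), ← Real.sqrt_mul (by positivity)]
  simp only [Matrix.smul_apply, smul_eq_mul, norm_mul, mul_pow, Finset.mul_sum]

lemma frob_vecMulVec (w : m → ℂ) (u : n → ℂ) : frob (vecMulVec w u) = evnorm w * evnorm u := by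
  rw [frob, evnorm, evnorm, ← Real.sqrt_mul (by positivity), Finset.sum_mul_sum]
  simp only [vecMulVec_apply, norm_mul, mul_pow]

lemma evnorm_mulVec_le (M : Matrix m n ℂ) (v : n → ℂ) : evnorm (M *ᵥ v) ≤ frob M * evnorm v := by
  rw [frob, evnorm, evnorm, ← Real.sqrt_mul (by positivity), Finset.sum_mul]
  refine Real.sqrt_le_sqrt (Finset.sum_le_sum fun i _ => ?_)
  calc ‖(M *ᵥ v) i‖ ^ 2 ≤ (∑ j, ‖M i j‖ * ‖v j‖) ^ 2 := by
        gcongr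
        exact (norm_sum_le _ _).trans_eq (by simp only [norm_mul])
    _ ≤ (∑ j, ‖M i j‖ ^ 2) * ∑ j, ‖v j‖ ^ 2 := Finset.sum_mul_sq_le_sq_mul_sq _ _ _

end Norms

section SigmaMin

variable {m n : Type*} [Fintype m] [Fintype n]

lemma bddBelow_evnorm_mulVec (T : Matrix m n ℂ) :
    BddBelow {x | ∃ v, evnorm v = 1 ∧ x = evnorm (T *ᵥ v)} :=
  ⟨0, by rintro _ ⟨v, -, rfl⟩; exact evnorm_nonneg _⟩

lemma sigmaMin_le_of_evnorm_mulVec_le {T : Matrix m n ℂ} {v : n → ℂ} {c : ℝ} (hv : v ≠ 0)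
    (h : evnorm (T *ᵥ v) ≤ c * evnorm v) : sigmaMin T ≤ c := by
  have hpos : 0 < evnorm v := (evnorm_nonneg v).lt_of_ne' (evnorm_eq_zero.not.mpr hv)
  have hnorm : ‖((evnorm v)⁻¹ : ℂ)‖ = (evnorm v)⁻¹ := by
    rw [← Complex.ofReal_inv, Complex.norm_real, Real.norm_of_nonneg (inv_nonneg.2 hpos.le)]
  refine (csInf_le (bddBelow_evnorm_mulVec T) ⟨((evnorm v)⁻¹ : ℂ) • v, ?_, rfl⟩).trans ?_
  · rw [evnorm_smul, hnorm, inv_mul_cancel₀ hpos.ne']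
  · rw [mulVec_smul, evnorm_smul, hnorm, inv_mul_le_iff₀ hpos, mul_comm]
    exact h

lemma sigmaMin_le_of_det_add_eq_zero [DecidableEq n] {A ΔX ΔY : Matrix n n ℂ} {μ : ℂ}
    (h : (A + ΔY + μ • ΔX).det = 0) : sigmaMin A ≤ frob ΔY + ‖μ‖ * frob ΔX := by
  obtain ⟨v, hv, hker⟩ := exists_mulVec_eq_zero_iff.mpr h
  refine sigmaMin_le_of_evnorm_mulVec_le hv ?_
  have hAv : A *ᵥ v = -(ΔY *ᵥ v + μ • ΔX *ᵥ v) := by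
    rw [eq_neg_iff_add_eq_zero, ← smul_mulVec, ← add_mulVec, ← add_mulVec, ← add_assoc, hker]
  calc evnorm (A *ᵥ v) ≤ evnorm (ΔY *ᵥ v) + ‖μ‖ * evnorm (ΔX *ᵥ v) := by
        rw [hAv, evnorm_neg, ← evnorm_smul]
        exact evnorm_add_le _ _
    _ ≤ frob ΔY * evnorm v + ‖μ‖ * (frob ΔX * evnorm v) := by
        gcongr <;> exact evnorm_mulVec_le _ _
    _ = (frob ΔY + ‖μ‖ * frob ΔX) * evnorm v := by ring

end SigmaMin

lemma add_mul_le_sqrt_mul_sqrt (a b c : ℝ) : a + c * b ≤ √(1 + c ^ 2) * √(a ^ 2 + b ^ 2) := by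
  rw [← Real.sqrt_mul (by positivity)]
  exact (le_abs_self _).trans (Real.abs_le_sqrt (by nlinarith [sq_nonneg (c * a - b)]))

lemma exists_det_add_eq_zero_of_evnorm_eq_one {n : Type*} [Fintype n] [DecidableEq n]
    (A : Matrix n n ℂ) (μ : ℂ) {v : n → ℂ} (hv : evnorm v = 1) :
    ∃ ΔX ΔY : Matrix n n ℂ, (A + ΔY + μ • ΔX).det = 0 ∧
      evnorm (A *ᵥ v) / √(1 + ‖μ‖ ^ 2) = √(frob ΔY ^ 2 + frob ΔX ^ 2) := by
  set t : ℝ := (1 + ‖μ‖ ^ 2)⁻¹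
  have ht : 0 < t := by positivity
  set R := vecMulVec (A *ᵥ v) (star v)
  have hRv : R *ᵥ v = A *ᵥ v := by
    rw [vecMulVec_mulVec, op_smul_eq_smul, star_dotProduct_self_eq_evnorm_sq, hv]
    simp
  have hfR : frob R = evnorm (A *ᵥ v) := by rw [frob_vecMulVec, evnorm_star, hv, mul_one]
  refine ⟨-((t : ℂ) * starRingEnd ℂ μ) • R, -(t : ℂ) • R, ?_, ?_⟩
  · have hcoef : 1 - (t : ℂ) - μ * ((t : ℂ) * starRingEnd ℂ μ) = 0 := by
      have hscale : (t : ℂ) * (1 + μ * starRingEnd ℂ μ) = 1 := by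
        rw [Complex.mul_conj', ← Complex.ofReal_pow, ← Complex.ofReal_one, ← Complex.ofReal_add,
          ← Complex.ofReal_mul, inv_mul_cancel₀ (by positivity)]
      linear_combination -hscale
    have hv0 : v ≠ 0 := by rintro rfl; simp [evnorm] at hv
    refine exists_mulVec_eq_zero_iff.mp ⟨v, hv0, ?_⟩
    rw [add_mulVec, add_mulVec, smul_mulVec, smul_mulVec, smul_mulVec, hRv, smul_smul]
    linear_combination (norm := module) hcoef • A *ᵥ v
  · have hnorm : ‖-(t : ℂ)‖ = t := by rw [norm_neg, Complex.norm_real, Real.norm_of_nonneg ht.le]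
    rw [frob_smul, frob_smul, hfR, hnorm, norm_neg, norm_mul, Complex.norm_real,
      Real.norm_of_nonneg ht.le, Complex.norm_conj]
    have hsize : (t * evnorm (A *ᵥ v)) ^ 2 + (t * ‖μ‖ * evnorm (A *ᵥ v)) ^ 2
        = (evnorm (A *ᵥ v) / √(1 + ‖μ‖ ^ 2)) ^ 2 := by
      have htt : t * (1 + ‖μ‖ ^ 2) = 1 := inv_mul_cancel₀ (by positivity)
      rw [div_pow, Real.sq_sqrt (by positivity), eq_div_iff (by positivity)]
      linear_combination evnorm (A *ᵥ v) ^ 2 * (t * (1 + ‖μ‖ ^ 2) + 1) * htt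
    rw [hsize, Real.sqrt_sq (by have := evnorm_nonneg (A *ᵥ v); positivity)]

open Pointwise in
lemma csInf_eq_div_of_div_mem {S T : Set ℝ} {c : ℝ} (hc : 0 < c) (hT : T.Nonempty)
    (hTS : ∀ y ∈ T, y / c ∈ S) (hST : ∀ x ∈ S, sInf T / c ≤ x) : sInf S = sInf T / c := by
  obtain ⟨y, hy⟩ := hT
  refine le_antisymm ?_ (le_csInf ⟨_, hTS y hy⟩ hST)
  have hsub : c⁻¹ • T ⊆ S := by
    rintro _ ⟨y, hy, rfl⟩
    simpa only [smul_eq_mul, inv_mul_eq_div] using hTS y hy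
  calc sInf S ≤ sInf (c⁻¹ • T) := csInf_le_csInf ⟨_, hST⟩ ⟨_, y, hy, rfl⟩ hsub
    _ = sInf T / c := by
      rw [Real.sInf_smul_of_nonneg (inv_nonneg.2 hc.le), smul_eq_mul, inv_mul_eq_div]

theorem stmt14_general {N : ℕ} (μ : ℂ) (X Y : Matrix (Fin N) (Fin N) ℂ) :
    sInf {x | ∃ ΔX ΔY : Matrix (Fin N) (Fin N) ℂ,
        (μ • X + Y + ΔY + μ • ΔX).det = 0 ∧
        x = Real.sqrt (frob ΔY ^ 2 + frob ΔX ^ 2)} =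
      sigmaMin (μ • X + Y) / Real.sqrt (1 + ‖μ‖ ^ 2) := by
  rcases isEmpty_or_nonempty (Fin N) with _ | ⟨⟨i⟩⟩
  · -- for `N = 0` there is no unit vector and `det = 1`, so both sides are `sInf ∅ = 0`
    simp [sigmaMin, evnorm, Matrix.det_isEmpty]
  refine csInf_eq_div_of_div_mem (by positivity) ⟨_, Pi.single i 1, ?_, rfl⟩ ?_ ?_
  · rw [evnorm_pi_single, norm_one]
  · rintro _ ⟨v, hv, rfl⟩
    exact exists_det_add_eq_zero_of_evnorm_eq_one _ μ hv
  · rintro _ ⟨ΔX, ΔY, hdet, rfl⟩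
    rw [div_le_iff₀ (by positivity), mul_comm]
    exact (sigmaMin_le_of_det_add_eq_zero hdet).trans (add_mul_le_sqrt_mul_sqrt _ _ _)

theorem stmt14 {N : ℕ} (μ : ℂ) (X Y : Matrix (Fin N) (Fin N) ℂ)
    (h : IsUnit (μ • X + Y)) :
    sInf {x | ∃ ΔX ΔY : Matrix (Fin N) (Fin N) ℂ,
        (μ • X + Y + ΔY + μ • ΔX).det = 0 ∧
        x = Real.sqrt (frob ΔY ^ 2 + frob ΔX ^ 2)} =
      sigmaMin (μ • X + Y) / Real.sqrt (1 + ‖μ‖ ^ 2) :=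
  stmt14_general μ X Y
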